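/- (Theorem 2) Let N ≥ 2, let E : Fin N → Fin N → Prop and C : Fin N → Fin N → Bool, and suppose the LQN is an optimal PM diagram for the N-partite W state, meaning: every edge of E is maximally matchable; E has exactly N perfect matchings; and the map sending each perfect matching to its outcome string is a bijection from the set of perfect matchings onto the N strings s : Fin N → Bool having exactly one coordinate equal to false (↓). Then the red edges all leave one common vertex: there exists v : Fin N such that the set of edges { (a, j) | E a j ∧ C a j = false } equals { (v, j) | j : Fin N }; in particular E v j holds and C v j = false for every j, and every edge (a, j) of E with a ≠ v has C a j = true. -/

import Mathlib

open scoped Classical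

/-!
A perfect matching of the blue edges would have an all-blue outcome string, which is not a
W-string; by Hall's theorem some set `S` of particles therefore has fewer blue neighbours than
elements. Taking, for a blue neighbour `m` of `S`, a perfect matching whose single red edge ends
at `m` maps `S` injectively into its blue neighbourhood, so `S` has no blue edges at all. A particle
`v ∈ S` then carries the unique red edge of every perfect matching, and maximal matchability
turns this into the statement about all red edges.
-/

open Finset

namespace LQN

variable {α : Type*}

def IsPerfectMatching (E : α → α → Prop) (σ : Equiv.Perm α) : Prop :=
  ∀ a, E a (σ a)

def outcome (C : α → α → Bool) (σ : Equiv.Perm α) (j : α) : Bool :=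
  C (σ⁻¹ j) j

@[simp]
lemma outcome_apply_self (C : α → α → Bool) (σ : Equiv.Perm α) (a : α) :
    outcome C σ (σ a) = C a (σ a) := by
  simp [outcome]

variable [Fintype α]

/-- Hall's marriage theorem, in contrapositive form, for a relation on a finite type. -/
theorem exists_card_biUnion_lt_card_of_forall_not_isPerfectMatching (R : α → α → Prop)
    (h : ∀ σ, ¬ IsPerfectMatching R σ) :
    ∃ S : Finset α, (S.biUnion fun a => univ.filter (R a)).card < S.card := by
  by_contra! hall
  obtain ⟨f, hf_inj, hf⟩ := (all_card_le_biUnion_card_iff_exists_injective _).mp hall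
  exact h (Equiv.ofBijective f hf_inj.bijective_of_finite) fun a => by simpa using hf a

theorem biUnion_eq_empty_of_card_biUnion_lt_card (R : α → α → Prop) {S : Finset α}
    (hS : (S.biUnion fun a => univ.filter (R a)).card < S.card)
    (hnear : ∀ m, ∃ σ : Equiv.Perm α, ∀ a, σ a ≠ m → R a (σ a)) :
    S.biUnion (fun a => univ.filter (R a)) = ∅ := by
  set T := S.biUnion fun a => univ.filter (R a)
  by_contra hT
  obtain ⟨m, hm⟩ := nonempty_iff_ne_empty.mpr hT
  obtain ⟨σ, hσ⟩ := hnear m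
  have hmaps : ∀ a ∈ S, σ a ∈ T := by
    intro a ha
    by_cases ham : σ a = m
    · rwa [ham]
    · exact mem_biUnion.mpr ⟨a, ha, by simpa using hσ a ham⟩
  have := card_le_card_of_injOn σ hmaps σ.injective.injOn
  omega

theorem exists_forall_not_of_forall_not_isPerfectMatching (R : α → α → Prop)
    (hno : ∀ σ, ¬ IsPerfectMatching R σ)
    (hnear : ∀ m, ∃ σ : Equiv.Perm α, ∀ a, σ a ≠ m → R a (σ a)) :
    ∃ v, ∀ j, ¬ R v j := by
  obtain ⟨S, hS⟩ := exists_card_biUnion_lt_card_of_forall_not_isPerfectMatching R hno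
  have hempty := biUnion_eq_empty_of_card_biUnion_lt_card R hS hnear
  obtain ⟨v, hv⟩ := card_pos.mp (Nat.zero_lt_of_lt hS)
  refine ⟨v, fun j hvj => ?_⟩
  have : j ∈ S.biUnion fun a => univ.filter (R a) := mem_biUnion.mpr ⟨v, hv, by simpa using hvj⟩
  simp [hempty] at this

theorem exists_forall_red_iff_eq (E : α → α → Prop) (C : α → α → Bool)
    (hmm : ∀ a j, E a j → ∃ σ, IsPerfectMatching E σ ∧ σ a = j)
    (hunique : ∀ σ, IsPerfectMatching E σ → ∃! j, outcome C σ j = false)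
    (hcover : ∀ m, ∃ σ, IsPerfectMatching E σ ∧ outcome C σ m = false) :
    ∃ v, ∀ a j, E a j ∧ C a j = false ↔ a = v := by
  have hno_blue : ∀ σ, ¬ IsPerfectMatching (fun a j => E a j ∧ C a j = true) σ := by
    intro σ hσ
    obtain ⟨j, hj, -⟩ := hunique σ fun a => (hσ a).1
    have := (hσ (σ⁻¹ j)).2
    simp_all [outcome]
  have hnear_blue : ∀ m, ∃ σ : Equiv.Perm α, ∀ a, σ a ≠ m → E a (σ a) ∧ C a (σ a) = true := by
    intro m
    obtain ⟨σ, hσ, hm⟩ := hcover m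
    refine ⟨σ, fun a ham => ⟨hσ a, ?_⟩⟩
    by_contra hred
    exact ham ((hunique σ hσ).unique (by simpa using hred) hm)
  obtain ⟨v, hv⟩ := exists_forall_not_of_forall_not_isPerfectMatching _ hno_blue hnear_blue
  have hred_at_v : ∀ σ, IsPerfectMatching E σ → ∀ j, outcome C σ j = false → j = σ v := by
    intro σ hσ j hj
    have hv_red : outcome C σ (σ v) = false := by
      simpa using fun hC => hv (σ v) ⟨hσ v, hC⟩
    exact (hunique σ hσ).unique hj hv_red
  refine ⟨v, fun a j => ⟨fun ⟨hE, hC⟩ => ?_, ?_⟩⟩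
  · obtain ⟨σ, hσ, rfl⟩ := hmm a j hE
    exact σ.injective (hred_at_v σ hσ _ (by simpa using hC))
  · rintro rfl
    obtain ⟨σ, hσ, hj⟩ := hcover j
    obtain rfl := hred_at_v σ hσ j hj
    exact ⟨hσ a, by simpa using hj⟩

end LQN

open LQN in
theorem lqn_thm2_w_state_general (N : ℕ)
    (E : Fin N → Fin N → Prop) (C : Fin N → Fin N → Bool)
    (hmm : ∀ a j : Fin N, E a j →
      ∃ σ : Equiv.Perm (Fin N), (∀ x, E x (σ x)) ∧ σ a = j)
    (hbij : Set.BijOn (fun σ : Equiv.Perm (Fin N) => fun j => C (σ⁻¹ j) j)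
      {σ : Equiv.Perm (Fin N) | ∀ a, E a (σ a)}
      {s : Fin N → Bool | (Finset.univ.filter (fun j => s j = false)).card = 1}) :
    ∃ v : Fin N,
      ({p : Fin N × Fin N | E p.1 p.2 ∧ C p.1 p.2 = false} =
        {p : Fin N × Fin N | p.1 = v}) ∧
      (∀ j, E v j ∧ C v j = false) ∧
      (∀ a j, E a j → a ≠ v → C a j = true) := by
  have hunique : ∀ σ, IsPerfectMatching E σ → ∃! j, outcome C σ j = false := fun σ hσ =>
    (Fintype.existsUnique_iff_card_one _).mpr (hbij.mapsTo hσ)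
  have hcover : ∀ m, ∃ σ, IsPerfectMatching E σ ∧ outcome C σ m = false := by
    intro m
    have hW : (fun j => decide (j ≠ m)) ∈
        {s : Fin N → Bool | (univ.filter fun j => s j = false).card = 1} := by
      simp [Finset.filter_eq']
    obtain ⟨σ, hσ, hs⟩ := hbij.surjOn hW
    exact ⟨σ, hσ, by simpa [outcome] using congrFun hs m⟩
  obtain ⟨v, hv⟩ := exists_forall_red_iff_eq E C hmm hunique hcover
  refine ⟨v, Set.ext fun p => hv p.1 p.2, fun j => (hv v j).mpr rfl, fun a j hE hav => ?_⟩
  simpa using mt (fun hC => (hv a j).mp ⟨hE, hC⟩) hav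

/-- Theorem 2: Suppose the LQN `(E, C)` is an optimal PM diagram for the
`N`-partite W state: every edge of `E` is maximally matchable, `E` has exactly `N`
perfect matchings, and the outcome-string map is a bijection from the set of perfect
matchings onto the `N` strings with exactly one `false` coordinate. Then all the red
(`false`) edges leave one common vertex `v`: the set of red edges is exactly
`{(v, j) | j}`; in particular `E v j` holds with `C v j = false` for every `j`, and every
edge `(a, j)` with `a ≠ v` is blue. -/
theorem lqn_thm2_w_state (N : ℕ) (hN : 2 ≤ N)
    (E : Fin N → Fin N → Prop) (C : Fin N → Fin N → Bool)
    (hmm : ∀ a j : Fin N, E a j →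
      ∃ σ : Equiv.Perm (Fin N), (∀ x, E x (σ x)) ∧ σ a = j)
    (hcard : (Finset.univ.filter
      (fun σ : Equiv.Perm (Fin N) => ∀ a, E a (σ a))).card = N)
    (hbij : Set.BijOn (fun σ : Equiv.Perm (Fin N) => fun j => C (σ⁻¹ j) j)
      {σ : Equiv.Perm (Fin N) | ∀ a, E a (σ a)}
      {s : Fin N → Bool | (Finset.univ.filter (fun j => s j = false)).card = 1}) :
    ∃ v : Fin N,
      ({p : Fin N × Fin N | E p.1 p.2 ∧ C p.1 p.2 = false} =
        {p : Fin N × Fin N | p.1 = v}) ∧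
      (∀ j, E v j ∧ C v j = false) ∧
      (∀ a j, E a j → a ≠ v → C a j = true) :=
  lqn_thm2_w_state_general N E C hmm hbij
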